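/- arXiv:1510.05535 — 2 statements merged into one kernel-verified Lean document; each statement's English description precedes it below -/
import Mathlib

section
/- If A and B are alternal moulds in the v_i variables (in ARI-bar), then arit(B)·A is alternal, where for v-moulds (amit(B)·A)(w)=Σ_{w=abc, b,c≠∅} A(ac)B(b⌋) and (anit(B)·A)(w)=Σ_{w=abc, a,b≠∅} A(ac)B(⌊b), and arit(B)·A = amit(B)·A - anit(B)·A. -/
open List

variable {K : Type*} [Field K] [CharZero K]

/-- The multiset (as a list, with multiplicity) of shuffles of two words. -/
def shuffles {α : Type*} : List α → List α → List (List α)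
  | [], v => [v]
  | u, [] => [u]
  | x :: u, y :: v =>
      ((shuffles u (y :: v)).map (x :: ·)) ++ ((shuffles (x :: u) v).map (y :: ·))
  termination_by u v => u.length + v.length

/-- A mould (at the level of evaluations) is alternal if all its shuffle sums over
pairs of nonempty words vanish. -/
def Alternal (A : List K → K) : Prop :=
  ∀ u v : List K, u ≠ [] → v ≠ [] → ((shuffles u v).map A).sum = 0

/-- mould multiplication `mu`. -/
def mu (A B : List K → K) : List K → K :=
  fun w => ∑ k ∈ Finset.range (w.length + 1), A (w.take k) * B (w.drop k)

/-- `lu(A,B) = mu(A,B) - mu(B,A)`. -/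
def lu (A B : List K → K) : List K → K :=
  fun w => mu A B w - mu B A w

/-- All decompositions of a word into two consecutive subwords. -/
def splits2 {α : Type*} (w : List α) : List (List α × List α) :=
  (List.range (w.length + 1)).map fun k => (w.take k, w.drop k)

/-- All decompositions of a word into three consecutive subwords. -/
def splits3 {α : Type*} (w : List α) : List (List α × List α × List α) :=
  (splits2 w).flatMap fun p => (splits2 p.2).map fun q => (p.1, q.1, q.2)

/-- Add `s` to the first letter of a word. -/
def addFirst (s : K) : List K → List K
  | [] => []
  | x :: xs => (x + s) :: xs

/-- Add `s` to the last letter of a word. -/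
def addLast (s : K) : List K → List K
  | [] => []
  | [x] => [x + s]
  | x :: xs => x :: addLast s xs

/-- `amit` for u-moulds: `(amit(B)·A)(w) = Σ_{w=abc, b,c≠∅} A(a⌈c) B(b)`. -/
def amitU (B A : List K → K) : List K → K := fun w =>
  ((splits3 w).map fun p =>
    match p with
    | (_, [], _) => 0
    | (_, _, []) => 0
    | (a, b, c) => A (a ++ addFirst b.sum c) * B b).sum

/-- `anit` for u-moulds: `(anit(B)·A)(w) = Σ_{w=abc, a,b≠∅} A(a⌉c) B(b)`. -/
def anitU (B A : List K → K) : List K → K := fun w =>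
  ((splits3 w).map fun p =>
    match p with
    | ([], _, _) => 0
    | (_, [], _) => 0
    | (a, b, c) => A (addLast b.sum a ++ c) * B b).sum

/-- `arit(B)·A = amit(B)·A - anit(B)·A` on u-moulds. -/
def aritU (B A : List K → K) : List K → K :=
  fun w => amitU B A w - anitU B A w

/-- the ari bracket on u-moulds. -/
def ariU (A B : List K → K) : List K → K :=
  fun w => aritU B A w + lu A B w - aritU A B w

/-- `amit` for v-moulds. -/
def amitV (B A : List K → K) : List K → K := fun w =>
  ((splits3 w).map fun p =>
    match p with
    | (_, [], _) => 0
    | (_, _, []) => 0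
    | (a, b, c0 :: c') => A (a ++ c0 :: c') * B (b.map (fun x => x - c0))).sum

/-- `anit` for v-moulds. -/
def anitV (B A : List K → K) : List K → K := fun w =>
  ((splits3 w).map fun p =>
    match p with
    | ([], _, _) => 0
    | (_, [], _) => 0
    | (a, b, c) => A (a ++ c) * B (b.map (fun x => x - a.getLastD 0))).sum

/-- `arit(B)·A = amit(B)·A - anit(B)·A` on v-moulds. -/
def aritV (B A : List K → K) : List K → K :=
  fun w => amitV B A w - anitV B A w

/-- the ari bracket on v-moulds. -/
def ariV (A B : List K → K) : List K → K :=
  fun w => aritV B A w + lu A B w - aritV A B w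

/-- `neg(A)(u_1,...,u_r) = A(-u_1,...,-u_r)`. -/
def negM (A : List K → K) : List K → K := fun w => A (w.map fun x => -x)

/-- `push(A)(u_1,...,u_r) = A(-u_1-⋯-u_r, u_1, ..., u_{r-1})`. -/
def pushM (A : List K → K) : List K → K := fun w =>
  match w with
  | [] => A []
  | _ :: _ => A ((-w.sum) :: w.dropLast)

/-- `mantar(A)(u_1,...,u_r) = (-1)^{r-1} A(u_r,...,u_1)`. -/
def mantarM (A : List K → K) : List K → K :=
  fun w => (-1 : K) ^ (w.length + 1) * A w.reverse

/-- argument list for swap from u-moulds to v-moulds: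
`(v_1,...,v_r) ↦ (v_r, v_{r-1}-v_r, ..., v_1-v_2)`. -/
def swapUargs (w : List K) : List K :=
  List.zipWith (· - ·) w.reverse (0 :: w.reverse)

/-- argument list for swap from v-moulds to u-moulds:
`(u_1,...,u_r) ↦ (u_1+⋯+u_r, u_1+⋯+u_{r-1}, ..., u_1)`. -/
def swapVargs (w : List K) : List K :=
  (List.range w.length).map fun i => (w.take (w.length - i)).sum

/-- swap, sending a u-mould to a v-mould. -/
def swapUV (A : List K → K) : List K → K := fun w => A (swapUargs w)

/-- swap, sending a v-mould to a u-mould. -/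
def swapVU (A : List K → K) : List K → K := fun w => A (swapVargs w)

/-- A constant-valued mould: its value depends only on the depth. -/
def IsConstantMould (C : List K → K) : Prop :=
  ∀ w w' : List K, w.length = w'.length → C w = C w'

/-!
Write `(arit(B)·A)(w)` as a sum over `w = abc` of `φ(a, b, c) = A(ac)B(b⌋) - A(ac)B(⌊b)`.
Deconcatenation is a morphism for the shuffle product, so summing over `w ∈ sh(u, v)` gives a sum
over `u = u₁u₂u₃`, `v = v₁v₂v₃` and `a ∈ sh(u₁, v₁)`, `b ∈ sh(u₂, v₂)`, `c ∈ sh(u₃, v₃)`.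
Since `φ` depends on `b` only through `B(b - y)`, alternality of `B` kills all terms but those
with `u₂ = []` or `v₂ = []`; by symmetry take `v₂ = []`, so `b = u₂`, and sum over the cuts
`v = v₁v₃`. If the flexion letter `y` (first letter of `c` for `amit`, last letter of `a` for
`anit`) comes from `v`, moving it across the cut turns an `amit` term into an `anit` term, and
these cancel. If it comes from `u₃` (resp. `u₁`), the sum over the cuts is
`B(u₂ - y) · Σ_{sh(u₁u₃, v)} A`, which vanishes by alternality of `A`.
-/

notation "∑ₗ " x:max " ∈ " l:50 ", " f:67 => List.sum (List.map (fun x => f) l)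

namespace List

variable {α β M : Type*}

theorem sum_map_sum_map_comm [AddCommMonoid M] (l : List α) (m : List β) (f : α → β → M) :
    ∑ₗ a ∈ l, ∑ₗ b ∈ m, f a b = ∑ₗ b ∈ m, ∑ₗ a ∈ l, f a b := by
  simpa using Multiset.sum_map_sum_map (l : Multiset α) (m : Multiset β) (f := f)

theorem sum_map_sub [AddCommGroup M] (l : List α) (f g : α → M) :
    ∑ₗ a ∈ l, (f a - g a) = ∑ₗ a ∈ l, f a - ∑ₗ a ∈ l, g a := by
  simpa using Multiset.sum_map_sub (m := (l : Multiset α)) (f := f) (g := g)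

end List

section Shuffles

variable {α β M : Type*} [AddCommMonoid M]

@[simp] theorem shuffles_nil_left (v : List α) : shuffles [] v = [v] := by
  simp [shuffles]

@[simp] theorem shuffles_nil_right (u : List α) : shuffles u [] = [u] := by
  cases u <;> simp [shuffles]

theorem shuffles_cons_cons (x y : α) (u v : List α) :
    shuffles (x :: u) (y :: v) =
      (shuffles u (y :: v)).map (x :: ·) ++ (shuffles (x :: u) v).map (y :: ·) := by
  rw [shuffles]

theorem sum_shuffles_cons_cons (x y : α) (u v : List α) (f : List α → M) :
    ∑ₗ w ∈ shuffles (x :: u) (y :: v), f w =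
      ∑ₗ w ∈ shuffles u (y :: v), f (x :: w) + ∑ₗ w ∈ shuffles (x :: u) v, f (y :: w) := by
  simp [shuffles_cons_cons, Function.comp_def]

theorem length_of_mem_shuffles : ∀ {u v w : List α}, w ∈ shuffles u v →
    w.length = u.length + v.length
  | [], v, w, h => by simp_all
  | x :: u, [], w, h => by simp_all
  | x :: u, y :: v, w, h => by
    simp only [shuffles_cons_cons, mem_append, mem_map] at h
    rcases h with ⟨w', hw', rfl⟩ | ⟨w', hw', rfl⟩ <;>
      simp only [length_cons, length_of_mem_shuffles hw'] <;> omega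
  termination_by u v => u.length + v.length

theorem map_shuffles (g : α → β) : ∀ u v : List α,
    shuffles (u.map g) (v.map g) = (shuffles u v).map (map g)
  | [], v => by simp
  | x :: u, [] => by simp
  | x :: u, y :: v => by
    simp only [map_cons, shuffles_cons_cons, map_append, map_map]
    rw [← map_cons, ← map_cons, map_shuffles g u (y :: v), map_shuffles g (x :: u) v]
    simp [Function.comp_def]
  termination_by u v => u.length + v.length

theorem shuffles_perm_comm : ∀ u v : List α, shuffles u v ~ shuffles v u
  | [], v => by cases v <;> simp
  | x :: u, [] => by simp
  | x :: u, y :: v => by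
    rw [shuffles_cons_cons, shuffles_cons_cons]
    exact (((shuffles_perm_comm u (y :: v)).map _).append
      ((shuffles_perm_comm (x :: u) v).map _)).trans perm_append_comm
  termination_by u v => u.length + v.length

theorem sum_shuffles_comm (u v : List α) (f : List α → M) :
    ∑ₗ w ∈ shuffles u v, f w = ∑ₗ w ∈ shuffles v u, f w :=
  ((shuffles_perm_comm u v).map f).sum_eq

theorem sum_shuffles_append_singleton (x y : α) (u v : List α) (f : List α → M) :
    ∑ₗ w ∈ shuffles (u ++ [x]) (v ++ [y]), f w =
      ∑ₗ w ∈ shuffles u (v ++ [y]), f (w ++ [x]) + ∑ₗ w ∈ shuffles (u ++ [x]) v, f (w ++ [y]) := by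
  induction u generalizing v f with
  | nil =>
    induction v generalizing f with
    | nil =>
      simp only [List.nil_append, sum_shuffles_cons_cons]
      simp [add_comm]
    | cons z v ih =>
      have := ih fun w => f (z :: w)
      simp only [List.nil_append, List.cons_append, sum_shuffles_cons_cons, shuffles_nil_left,
        List.map_cons, List.map_nil, List.sum_cons, List.sum_nil, add_zero] at this ⊢
      rw [this]
      abel
  | cons x₁ u ihu =>
    induction v generalizing f with
    | nil =>
      have := ihu [] fun w => f (x₁ :: w)
      simp only [List.nil_append, List.cons_append, sum_shuffles_cons_cons, shuffles_nil_right,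
        List.map_cons, List.map_nil, List.sum_cons, List.sum_nil, add_zero] at this ⊢
      rw [this]
      abel
    | cons z v ihv =>
      have hx := ihu (z :: v) fun w => f (x₁ :: w)
      have hz := ihv fun w => f (z :: w)
      simp only [List.cons_append, sum_shuffles_cons_cons] at hx hz ⊢
      rw [hx, hz]
      abel

end Shuffles

section Splits

variable {α M : Type*} [AddCommMonoid M]

@[simp] theorem splits2_nil : splits2 ([] : List α) = [([], [])] := by
  simp [splits2]

theorem splits2_cons (x : α) (w : List α) :
    splits2 (x :: w) = ([], x :: w) :: (splits2 w).map fun p => (x :: p.1, p.2) := by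
  simp [splits2, List.range_succ_eq_map, Function.comp_def]

theorem sum_splits2_cons (x : α) (w : List α) (f : List α × List α → M) :
    ∑ₗ p ∈ splits2 (x :: w), f p = f ([], x :: w) + ∑ₗ p ∈ splits2 w, f (x :: p.1, p.2) := by
  simp [splits2_cons, Function.comp_def]

theorem sum_splits3 (w : List α) (f : List α × List α × List α → M) :
    ∑ₗ t ∈ splits3 w, f t = ∑ₗ p ∈ splits2 w, ∑ₗ q ∈ splits2 p.2, f (p.1, q.1, q.2) := by
  simp [splits3, List.flatMap_def, List.sum_flatten, Function.comp_def]

theorem sum_splits3_eq_sum_splits2 (w : List α) (F : List α → List α → List α → M)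
    (hF : ∀ a b c, b ≠ [] → F a b c = 0) :
    ∑ₗ t ∈ splits3 w, F t.1 t.2.1 t.2.2 = ∑ₗ p ∈ splits2 w, F p.1 [] p.2 := by
  rw [sum_splits3]
  refine congrArg List.sum (List.map_congr_left fun p _ => ?_)
  rcases p with ⟨a, _ | ⟨x, c⟩⟩
  · simp
  · simp [sum_splits2_cons, hF]

/-- The decompositions `v = v₁ ++ y :: v₃`, as triples `(v₁, y, v₃)`. -/
def pivots : List α → List (List α × α × List α)
  | [] => []
  | y :: v => ([], y, v) :: (pivots v).map fun t => (y :: t.1, t.2.1, t.2.2)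

theorem sum_splits2_eq_sum_pivots_add (v : List α) (F : List α → List α → M) :
    ∑ₗ p ∈ splits2 v, F p.1 p.2 = ∑ₗ t ∈ pivots v, F t.1 (t.2.1 :: t.2.2) + F v [] := by
  induction v generalizing F with
  | nil => simp [pivots]
  | cons y v ih =>
    rw [sum_splits2_cons, ih fun a c => F (y :: a) c]
    simp [pivots, Function.comp_def, add_assoc]

theorem sum_splits2_eq_add_sum_pivots (v : List α) (F : List α → List α → M) :
    ∑ₗ p ∈ splits2 v, F p.1 p.2 = F [] v + ∑ₗ t ∈ pivots v, F (t.1 ++ [t.2.1]) t.2.2 := by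
  induction v generalizing F with
  | nil => simp [pivots]
  | cons y v ih =>
    rw [sum_splits2_cons, ih fun a c => F (y :: a) c]
    simp [pivots, Function.comp_def]

end Splits

section Deconcatenation

variable {α M : Type*} [AddCommMonoid M]

theorem sum_shuffles_sum_splits2 (u v : List α) (F : List α → List α → M) :
    ∑ₗ w ∈ shuffles u v, ∑ₗ p ∈ splits2 w, F p.1 p.2 =
      ∑ₗ p ∈ splits2 u, ∑ₗ q ∈ splits2 v,
        ∑ₗ a ∈ shuffles p.1 q.1, ∑ₗ c ∈ shuffles p.2 q.2, F a c := by
  induction u generalizing v F with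
  | nil => simp
  | cons x u ihu =>
    induction v generalizing F with
    | nil => simp
    | cons y v ihv =>
      rw [sum_shuffles_cons_cons]
      simp only [sum_splits2_cons, List.sum_map_add]
      rw [ihu (y :: v) fun a c => F (x :: a) c, ihv fun a c => F (y :: a) c]
      simp only [sum_splits2_cons, sum_shuffles_cons_cons, List.sum_map_add, shuffles_nil_left,
        shuffles_nil_right, List.map_cons, List.map_nil, List.sum_cons, List.sum_nil, add_zero]
      abel

theorem sum_shuffles_sum_splits3 (u v : List α) (F : List α → List α → List α → M) :
    ∑ₗ w ∈ shuffles u v, ∑ₗ t ∈ splits3 w, F t.1 t.2.1 t.2.2 =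
      ∑ₗ s ∈ splits3 u, ∑ₗ t ∈ splits3 v, ∑ₗ a ∈ shuffles s.1 t.1,
        ∑ₗ b ∈ shuffles s.2.1 t.2.1, ∑ₗ c ∈ shuffles s.2.2 t.2.2, F a b c := by
  simp only [sum_splits3]
  rw [sum_shuffles_sum_splits2 u v fun a r => ∑ₗ q ∈ splits2 r, F a q.1 q.2]
  simp only [sum_shuffles_sum_splits2, List.sum_map_sum_map_comm (shuffles _ _) (splits2 _)]
  exact congrArg List.sum (List.map_congr_left fun p _ => List.sum_map_sum_map_comm _ _ _)

end Deconcatenation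

section SplitShuffleSum

variable {α M : Type*} [AddCommMonoid M]

def splitShuffleSum (u₁ u₃ v : List α) (H : List α → List α → M) : M :=
  ∑ₗ p ∈ splits2 v, ∑ₗ a ∈ shuffles u₁ p.1, ∑ₗ c ∈ shuffles u₃ p.2, H a c

theorem splitShuffleSum_append_cons (u₁ u₃ v : List α) (x : α) (f : List α → M) :
    splitShuffleSum u₁ u₃ v (fun a c => f (a ++ x :: c)) =
      ∑ₗ w ∈ shuffles (u₁ ++ x :: u₃) v, f w := by
  induction u₁ generalizing v f with
  | nil =>
    induction v generalizing f with
    | nil => simp [splitShuffleSum]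
    | cons y v ih =>
      have := ih fun w => f (y :: w)
      simp only [splitShuffleSum, sum_splits2_cons, shuffles_nil_left, List.map_cons,
        List.map_nil, List.sum_cons, List.sum_nil, add_zero, List.nil_append,
        List.cons_append] at this ⊢
      rw [sum_shuffles_cons_cons, this]
  | cons x₁ u₁ ihu =>
    induction v generalizing f with
    | nil => simp [splitShuffleSum]
    | cons y v ihv =>
      have hx := ihu (y :: v) fun w => f (x₁ :: w)
      have hy := ihv fun w => f (y :: w)
      simp only [splitShuffleSum, sum_splits2_cons, sum_shuffles_cons_cons, List.sum_map_add,
        shuffles_nil_right, List.map_cons, List.map_nil, List.sum_cons, List.sum_nil, add_zero,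
        List.cons_append] at hx hy ⊢
      rw [← hx, ← hy]
      abel

end SplitShuffleSum

section Weights

variable {α R : Type*} [Semiring R]

theorem splitShuffleSum_mul_right (u₁ u₃ v : List α) (H : List α → List α → R) (r : R) :
    splitShuffleSum u₁ u₃ v (fun a c => H a c * r) = splitShuffleSum u₁ u₃ v H * r := by
  simp only [splitShuffleSum, List.sum_map_mul_right]

variable (A : List α → R) (β : α → R)

def weightFirst (a c : List α) : R :=
  match c.head? with
  | none => 0
  | some y => A (a ++ c) * β y

def weightLast (a c : List α) : R :=
  match a.getLast? with
  | none => 0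
  | some y => A (a ++ c) * β y

@[simp] theorem weightFirst_nil (a : List α) : weightFirst A β a [] = 0 := rfl

@[simp] theorem weightFirst_cons (a c : List α) (y : α) :
    weightFirst A β a (y :: c) = A (a ++ y :: c) * β y := rfl

@[simp] theorem weightLast_nil (c : List α) : weightLast A β [] c = 0 := rfl

@[simp] theorem weightLast_append_singleton (a c : List α) (y : α) :
    weightLast A β (a ++ [y]) c = A (a ++ y :: c) * β y := by
  simp [weightLast]

theorem sum_weightFirst {ι : Type*} (l : List ι) (γ : ι → α → R) (a c : List α) :
    ∑ₗ i ∈ l, weightFirst A (γ i) a c = weightFirst A (fun y => ∑ₗ i ∈ l, γ i y) a c := by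
  unfold weightFirst
  split <;> simp [List.sum_map_mul_left]

theorem sum_weightLast {ι : Type*} (l : List ι) (γ : ι → α → R) (a c : List α) :
    ∑ₗ i ∈ l, weightLast A (γ i) a c = weightLast A (fun y => ∑ₗ i ∈ l, γ i y) a c := by
  unfold weightLast
  split <;> simp [List.sum_map_mul_left]

@[simp] theorem weightFirst_zero (a c : List α) : weightFirst A (fun _ => 0) a c = 0 := by
  unfold weightFirst
  split <;> simp

@[simp] theorem weightLast_zero (a c : List α) : weightLast A (fun _ => 0) a c = 0 := by
  unfold weightLast
  split <;> simp

/-- The terms in which the weighting letter `y` comes from `v = v₁ ++ y :: v₃`: `weightFirst`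
and `weightLast` produce the same ones. -/
def pivotSum (u₁ u₃ v : List α) : R :=
  ∑ₗ t ∈ pivots v, ∑ₗ a ∈ shuffles u₁ t.1, ∑ₗ c ∈ shuffles u₃ t.2.2,
    A (a ++ t.2.1 :: c) * β t.2.1

theorem splitShuffleSum_weightFirst_nil (u₁ v : List α) :
    splitShuffleSum u₁ [] v (weightFirst A β) = pivotSum A β u₁ [] v := by
  rw [splitShuffleSum, sum_splits2_eq_sum_pivots_add v fun v₁ v₃ =>
    ∑ₗ a ∈ shuffles u₁ v₁, ∑ₗ c ∈ shuffles [] v₃, weightFirst A β a c]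
  simp [pivotSum]

theorem splitShuffleSum_weightFirst_cons (u₁ u₃ v : List α) (x : α) :
    splitShuffleSum u₁ (x :: u₃) v (weightFirst A β) =
      (∑ₗ w ∈ shuffles (u₁ ++ x :: u₃) v, A w) * β x + pivotSum A β u₁ (x :: u₃) v := by
  rw [← splitShuffleSum_append_cons, ← splitShuffleSum_mul_right, splitShuffleSum,
    splitShuffleSum, sum_splits2_eq_sum_pivots_add v fun v₁ v₃ =>
      ∑ₗ a ∈ shuffles u₁ v₁, ∑ₗ c ∈ shuffles (x :: u₃) v₃, weightFirst A β a c,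
    sum_splits2_eq_sum_pivots_add v fun v₁ v₃ =>
      ∑ₗ a ∈ shuffles u₁ v₁, ∑ₗ c ∈ shuffles u₃ v₃, A (a ++ x :: c) * β x]
  simp only [pivotSum, sum_shuffles_cons_cons, weightFirst_cons, shuffles_nil_right,
    List.sum_map_add, List.map_cons, List.map_nil, List.sum_cons, List.sum_nil, add_zero]
  abel

theorem splitShuffleSum_weightLast_nil (u₃ v : List α) :
    splitShuffleSum [] u₃ v (weightLast A β) = pivotSum A β [] u₃ v := by
  rw [splitShuffleSum, sum_splits2_eq_add_sum_pivots v fun v₁ v₃ =>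
    ∑ₗ a ∈ shuffles [] v₁, ∑ₗ c ∈ shuffles u₃ v₃, weightLast A β a c]
  simp [pivotSum]

theorem splitShuffleSum_weightLast_append_singleton (u₁ u₃ v : List α) (x : α) :
    splitShuffleSum (u₁ ++ [x]) u₃ v (weightLast A β) =
      (∑ₗ w ∈ shuffles (u₁ ++ x :: u₃) v, A w) * β x + pivotSum A β (u₁ ++ [x]) u₃ v := by
  rw [← splitShuffleSum_append_cons, ← splitShuffleSum_mul_right, splitShuffleSum,
    splitShuffleSum, sum_splits2_eq_add_sum_pivots v fun v₁ v₃ =>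
      ∑ₗ a ∈ shuffles (u₁ ++ [x]) v₁, ∑ₗ c ∈ shuffles u₃ v₃, weightLast A β a c,
    sum_splits2_eq_add_sum_pivots v fun v₁ v₃ =>
      ∑ₗ a ∈ shuffles u₁ v₁, ∑ₗ c ∈ shuffles u₃ v₃, A (a ++ x :: c) * β x]
  simp only [pivotSum, sum_shuffles_append_singleton, weightLast_append_singleton,
    shuffles_nil_right, List.sum_map_add, List.map_cons, List.map_nil, List.sum_cons,
    List.sum_nil, add_zero]
  abel

end Weights

theorem splitShuffleSum_weightFirst_sub_weightLast {α R : Type*} [Ring R] (A : List α → R)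
    (β : α → R) (v : List α) (hA : ∀ u : List α, u ≠ [] → ∑ₗ w ∈ shuffles u v, A w = 0)
    (u₁ u₃ : List α) :
    splitShuffleSum u₁ u₃ v (fun a c => weightFirst A β a c - weightLast A β a c) = 0 := by
  have hsub : splitShuffleSum u₁ u₃ v (fun a c => weightFirst A β a c - weightLast A β a c) =
      splitShuffleSum u₁ u₃ v (weightFirst A β) - splitShuffleSum u₁ u₃ v (weightLast A β) := by
    simp only [splitShuffleSum, List.sum_map_sub]
  rw [hsub]
  rcases u₃ with _ | ⟨x, u₃⟩ <;> rcases List.eq_nil_or_concat' u₁ with rfl | ⟨u₁, x', rfl⟩ <;>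
    simp [splitShuffleSum_weightFirst_nil, splitShuffleSum_weightFirst_cons,
      splitShuffleSum_weightLast_nil, splitShuffleSum_weightLast_append_singleton, hA]

section Arit

variable {𝕜 : Type*} [Field 𝕜]

theorem Alternal.comp_map {B : List 𝕜 → 𝕜} (hB : Alternal B) (g : 𝕜 → 𝕜) :
    Alternal fun w => B (w.map g) := by
  intro u v hu hv
  have := hB (u.map g) (v.map g) (by simpa using hu) (by simpa using hv)
  rwa [map_shuffles, List.map_map] at this

/-- The summand of `arit(B)·A` at `w = abc`: with `β y = B (b - y)`, the flexions are
`B(b⌋) = β (first letter of c)` and `B(⌊b) = β (last letter of a)`. -/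
def aritTerm (B A : List 𝕜 → 𝕜) : List 𝕜 → List 𝕜 → List 𝕜 → 𝕜
  | _, [], _ => 0
  | a, b, c => weightFirst A (fun y => B (b.map fun x => x - y)) a c -
      weightLast A (fun y => B (b.map fun x => x - y)) a c

@[simp] theorem aritTerm_nil_mid (B A : List 𝕜 → 𝕜) (a c : List 𝕜) : aritTerm B A a [] c = 0 :=
  rfl

theorem aritTerm_of_ne_nil (B A : List 𝕜 → 𝕜) {a b c : List 𝕜} (hb : b ≠ []) :
    aritTerm B A a b c = weightFirst A (fun y => B (b.map fun x => x - y)) a c -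
      weightLast A (fun y => B (b.map fun x => x - y)) a c := by
  cases b
  · contradiction
  · rfl

theorem aritV_eq_sum_splits3 (B A : List 𝕜 → 𝕜) (w : List 𝕜) :
    aritV B A w = ∑ₗ t ∈ splits3 w, aritTerm B A t.1 t.2.1 t.2.2 := by
  simp only [aritV, amitV, anitV, ← List.sum_map_sub]
  refine congrArg List.sum (List.map_congr_left fun ⟨a, b, c⟩ _ => ?_)
  rcases a with _ | ⟨x, a⟩ <;> rcases b with _ | ⟨y, b⟩ <;> rcases c with _ | ⟨z, c⟩ <;>
    simp [aritTerm, weightFirst, weightLast, List.getLast?_cons, List.getLastD_eq_getLast?]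

theorem sum_shuffles_aritTerm {B : List 𝕜 → 𝕜} (hB : Alternal B) (A : List 𝕜 → 𝕜)
    (a c m₁ m₂ : List 𝕜) :
    ∑ₗ b ∈ shuffles m₁ m₂, aritTerm B A a b c =
      (if m₂ = [] then aritTerm B A a m₁ c else 0) +
        (if m₁ = [] then aritTerm B A a m₂ c else 0) := by
  rcases m₁ with _ | ⟨x, m₁⟩ <;> rcases m₂ with _ | ⟨y, m₂⟩
  · simp
  · simp
  · simp
  have hB' (t : 𝕜) : ∑ₗ b ∈ shuffles (x :: m₁) (y :: m₂), B (b.map fun z => z - t) = 0 :=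
    hB.comp_map _ _ _ (List.cons_ne_nil _ _) (List.cons_ne_nil _ _)
  have hne {b} (hb : b ∈ shuffles (x :: m₁) (y :: m₂)) : b ≠ [] :=
    List.ne_nil_of_length_pos (by simp [length_of_mem_shuffles hb])
  rw [List.map_congr_left fun b hb => aritTerm_of_ne_nil B A (hne hb), List.sum_map_sub,
    sum_weightFirst, sum_weightLast]
  simp [hB']

theorem sum_shuffles_sum_shuffles_aritTerm {B : List 𝕜 → 𝕜} (hB : Alternal B)
    (A : List 𝕜 → 𝕜) (a m₁ m₂ t₁ t₂ : List 𝕜) :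
    ∑ₗ b ∈ shuffles m₁ m₂, ∑ₗ c ∈ shuffles t₁ t₂, aritTerm B A a b c =
      (if m₂ = [] then ∑ₗ c ∈ shuffles t₁ t₂, aritTerm B A a m₁ c else 0) +
        (if m₁ = [] then ∑ₗ c ∈ shuffles t₁ t₂, aritTerm B A a m₂ c else 0) := by
  rw [List.sum_map_sum_map_comm]
  simp only [sum_shuffles_aritTerm hB, List.sum_map_add]
  split_ifs <;> simp

theorem sum_shuffles_aritV {B : List 𝕜 → 𝕜} (hB : Alternal B) (A : List 𝕜 → 𝕜)
    (u v : List 𝕜) :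
    ∑ₗ w ∈ shuffles u v, aritV B A w =
      ∑ₗ s ∈ splits3 u, splitShuffleSum s.1 s.2.2 v (fun a c => aritTerm B A a s.2.1 c) +
        ∑ₗ t ∈ splits3 v, splitShuffleSum t.1 t.2.2 u (fun a c => aritTerm B A a t.2.1 c) := by
  simp only [aritV_eq_sum_splits3, sum_shuffles_sum_splits3,
    sum_shuffles_sum_shuffles_aritTerm hB, List.sum_map_add]
  congr 1
  · refine congrArg List.sum (List.map_congr_left fun s _ => ?_)
    rw [sum_splits3_eq_sum_splits2 v (fun t₁ t₂ t₃ => ∑ₗ a ∈ shuffles s.1 t₁,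
      if t₂ = [] then ∑ₗ c ∈ shuffles s.2.2 t₃, aritTerm B A a s.2.1 c else 0) (by simp_all)]
    simp [splitShuffleSum]
  · rw [List.sum_map_sum_map_comm]
    refine congrArg List.sum (List.map_congr_left fun t _ => ?_)
    rw [sum_splits3_eq_sum_splits2 u (fun s₁ s₂ s₃ => ∑ₗ a ∈ shuffles s₁ t.1,
      if s₂ = [] then ∑ₗ c ∈ shuffles s₃ t.2.2, aritTerm B A a t.2.1 c else 0) (by simp_all)]
    simp [splitShuffleSum, sum_shuffles_comm _ t.1, sum_shuffles_comm _ t.2.2]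

theorem splitShuffleSum_aritTerm (B : List 𝕜 → 𝕜) {A : List 𝕜 → 𝕜} (hA : Alternal A)
    (b u₁ u₃ : List 𝕜) {v : List 𝕜} (hv : v ≠ []) :
    splitShuffleSum u₁ u₃ v (fun a c => aritTerm B A a b c) = 0 := by
  rcases eq_or_ne b [] with rfl | hb
  · simp [splitShuffleSum]
  · simp only [aritTerm_of_ne_nil B A hb]
    exact splitShuffleSum_weightFirst_sub_weightLast A _ v (fun u hu => hA u v hu hv) u₁ u₃

end Arit

theorem aritV_alternal_general (A B : List K → K)
    (hA : Alternal A) (hB : Alternal B) : Alternal (aritV B A) := by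
  intro u v hu hv
  rw [sum_shuffles_aritV hB A u v]
  simp [splitShuffleSum_aritTerm B hA _ _ _ hu, splitShuffleSum_aritTerm B hA _ _ _ hv]

/-- if `A` and `B` are alternal moulds in ARI-bar (v-variables),
then `arit(B)·A` is alternal. -/
theorem aritV_alternal (A B : List K → K) (hA0 : A [] = 0) (hB0 : B [] = 0)
    (hA : Alternal A) (hB : Alternal B) : Alternal (aritV B A) :=
  aritV_alternal_general A B hA hB
end

section
/- If A and B are push-invariant moulds in ARI, then swap(ari(swap(A), swap(B))) = ari(A,B), where the inner ari is the Lie bracket on v-moulds and the outer equality is in u-moulds. -/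
open List

variable {K : Type*} [Field K] [CharZero K]

/-!
Evaluate both sides on a u-word `w`, so that the v-moulds are read at `swapVargs w`. A split
`(a, b, c)` of `w` corresponds to the split `swapSplit (a, b, c)` of `swapVargs w`, whose blocks
are the swaps of `c`, `b`, `a` (shifted by partial sums); in particular
`swapVargs (x ++ y) = (swapVargs y).map (· + x.sum) ++ swapVargs x`.

Under this correspondence the `amit` terms of the v-bracket become the `amit` terms of the
u-bracket with nonempty first block, and `mu (swapUV A) (swapUV B)` supplies those with empty first
block; together they give `amitU B A + mu A B`, the single boundary term `A w * B []` occurring on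
both sides. An `anit` term of the v-bracket becomes an `anit` term of the u-bracket after one letter
moves from the middle block to the first, and its `B`-factor becomes `push B` of the shifted
middle block. Hence push-invariance of `A` and `B` is exactly what is needed.
-/

def triangle (r : ℕ) : Finset (ℕ × ℕ) :=
  (Finset.range (r + 1) ×ˢ Finset.range (r + 1)).filter fun p => p.1 + p.2 ≤ r

@[simp]
lemma mem_triangle {r : ℕ} {p : ℕ × ℕ} : p ∈ triangle r ↔ p.1 + p.2 ≤ r := by
  simp only [triangle, Finset.mem_filter, Finset.mem_product, Finset.mem_range]
  omega

section TriangleSums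

variable {M : Type*} [AddCommMonoid M]

lemma sum_triangle (r : ℕ) (f : ℕ × ℕ → M) :
    ∑ p ∈ triangle r, f p = ∑ i ∈ Finset.range (r + 1), ∑ j ∈ Finset.range (r - i + 1), f (i, j) :=
  Finset.sum_finset_product _ _ _ fun p => by
    simp only [mem_triangle, Finset.mem_range]
    omega

lemma sum_triangle_reflect (r : ℕ) (f : ℕ × ℕ → M) :
    ∑ p ∈ triangle r, f (r - p.1 - p.2, p.2) = ∑ p ∈ triangle r, f p := by
  refine Finset.sum_nbij' (fun p => (r - p.1 - p.2, p.2)) (fun p => (r - p.1 - p.2, p.2))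
    ?_ ?_ ?_ ?_ fun _ _ => rfl
  all_goals
    rintro ⟨i, j⟩ hp
    simp only [mem_triangle, Prod.mk.injEq, and_true] at hp ⊢
    omega

lemma sum_triangle_shift {r : ℕ} {f g : ℕ × ℕ → M}
    (h : ∀ i j, 0 < j → i + j < r → f (i, j) = g (i + 1, j)) :
    ∑ p ∈ triangle r, (if 0 < p.2 ∧ p.1 + p.2 < r then f p else 0)
      = ∑ p ∈ triangle r, (if 0 < p.1 ∧ 0 < p.2 then g p else 0) := by
  rw [← Finset.sum_filter, ← Finset.sum_filter]
  refine Finset.sum_nbij' (fun p => (p.1 + 1, p.2)) (fun p => (p.1 - 1, p.2))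
    ?_ ?_ ?_ ?_ fun p hp => h p.1 p.2 (Finset.mem_filter.1 hp).2.1 (Finset.mem_filter.1 hp).2.2
  all_goals
    rintro ⟨i, j⟩ hp
    simp only [Finset.mem_filter, mem_triangle, Prod.mk.injEq, and_true] at hp ⊢
    omega

lemma sum_triangle_add_sum_range {r : ℕ} (f : ℕ × ℕ → M) (h : f (0, 0) = f (r, 0)) :
    ∑ p ∈ triangle r, (if 0 < p.1 ∧ 0 < p.2 then f p else 0) + ∑ j ∈ Finset.range (r + 1), f (0, j)
      = ∑ p ∈ triangle r, (if 0 < p.2 ∧ p.1 + p.2 < r then f p else 0)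
        + ∑ i ∈ Finset.range (r + 1), f (i, r - i) := by
  have h_fst : ∑ j ∈ Finset.range (r + 1), f (0, j)
      = ∑ p ∈ triangle r, if p.1 = 0 then f p else 0 := by
    symm
    rw [sum_triangle, Finset.sum_eq_single 0 (fun i _ hi => by simp [hi]) (by simp)]
    simp
  have h_diag : ∑ i ∈ Finset.range (r + 1), f (i, r - i)
      = ∑ p ∈ triangle r, if p.1 + p.2 = r then f p else 0 := by
    rw [sum_triangle]
    refine Finset.sum_congr rfl fun i hi => ?_
    rw [Finset.sum_eq_single (r - i) (fun j _ hj => if_neg (by omega)) (by simp)]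
    simp only [Finset.mem_range] at hi
    rw [if_pos (by omega)]
  calc _ = ∑ p ∈ triangle r, ((if 0 < p.2 then f p else 0) + if p = (0, 0) then f p else 0) := by
        rw [h_fst, ← Finset.sum_add_distrib]
        refine Finset.sum_congr rfl fun p _ => ?_
        rcases p with ⟨_ | i, _ | j⟩ <;> simp
    _ = ∑ p ∈ triangle r, ((if 0 < p.2 then f p else 0) + if p = (r, 0) then f p else 0) := by
        simp only [Finset.sum_add_distrib, Finset.sum_ite_eq', mem_triangle]
        simp [h]
    _ = _ := by
        rw [h_diag, ← Finset.sum_add_distrib]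
        refine Finset.sum_congr rfl fun p hp => ?_
        rw [mem_triangle] at hp
        rcases p with ⟨i, j⟩
        simp only [Prod.mk.injEq]
        split_ifs <;> first | rfl | omega | simp

end TriangleSums

section Splits

variable {α : Type*}

lemma sum_map_range {M : Type*} [AddCommMonoid M] (n : ℕ) (f : ℕ → M) :
    ((List.range n).map f).sum = ∑ i ∈ Finset.range n, f i :=
  rfl

def split3At (w : List α) (p : ℕ × ℕ) : List α × List α × List α :=
  (w.take p.1, (w.drop p.1).take p.2, (w.drop p.1).drop p.2)

lemma sum_splits3_s11 {M : Type*} [AddCommMonoid M] (w : List α) (f : List α × List α × List α → M) :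
    ((splits3 w).map f).sum = ∑ p ∈ triangle w.length, f (split3At w p) := by
  rw [splits3, List.map_flatMap, List.flatMap_def, List.sum_flatten, List.map_map, splits2,
    List.map_map, sum_map_range, sum_triangle]
  refine Finset.sum_congr rfl fun i _ => ?_
  simp only [Function.comp_apply, splits2, List.map_map, List.length_drop, sum_map_range]
  rfl

lemma split3At_append (a b c : List α) :
    split3At (a ++ b ++ c) (a.length, b.length) = (a, b, c) := by
  simp [split3At]

lemma eq_append_of_split3At_eq {w a b c : List α} {p : ℕ × ℕ} (hp : p ∈ triangle w.length)
    (h : split3At w p = (a, b, c)) : w = a ++ b ++ c ∧ a.length = p.1 ∧ b.length = p.2 := by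
  simp only [split3At, Prod.mk.injEq] at h
  obtain ⟨rfl, rfl, rfl⟩ := h
  simp only [mem_triangle] at hp
  simp only [List.append_assoc, List.take_append_drop, List.length_take, List.length_drop, true_and]
  omega

lemma split3At_eq_nil_iff {w a b c : List α} {p : ℕ × ℕ} (hp : p ∈ triangle w.length)
    (h : split3At w p = (a, b, c)) :
    (a = [] ↔ p.1 = 0) ∧ (b = [] ↔ p.2 = 0) ∧ (c = [] ↔ p.1 + p.2 = w.length) := by
  obtain ⟨rfl, ha, hb⟩ := eq_append_of_split3At_eq hp h
  simp only [← List.length_eq_zero_iff, List.length_append, ha, hb, true_and]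
  omega

lemma exists_split3At_cons {w : List α} {i j : ℕ} (hj : 0 < j) (hij : i + j < w.length) :
    ∃ a x b y c, split3At w (i, j) = (a, x :: b, y :: c)
      ∧ split3At w (i + 1, j) = (a ++ [x], b ++ [y], c) := by
  have hp : (i, j) ∈ triangle w.length := mem_triangle.2 hij.le
  rcases h : split3At w (i, j) with ⟨a, _ | ⟨x, b⟩, _ | ⟨y, c⟩⟩
  all_goals obtain ⟨-, hb, hc⟩ := split3At_eq_nil_iff hp h
  · exact absurd (hb.1 rfl) hj.ne'
  · exact absurd (hb.1 rfl) hj.ne'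
  · exact absurd (hc.1 rfl) hij.ne
  obtain ⟨rfl, rfl, hb⟩ := eq_append_of_split3At_eq hp h
  refine ⟨a, x, b, y, c, rfl, ?_⟩
  have hw : a ++ x :: b ++ y :: c = a ++ [x] ++ (b ++ [y]) ++ c := by simp
  have hj : j = (b ++ [y]).length := by simpa using hb.symm
  rw [hw, hj, show a.length + 1 = (a ++ [x]).length by simp, split3At_append]

end Splits

section Diffs

variable {G : Type*} [AddCommGroup G]

def diffs (p : G) : List G → List G
  | [] => []
  | x :: t => (x - p) :: diffs x t

lemma zipWith_sub_cons_eq_diffs (p : G) (l : List G) :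
    List.zipWith (· - ·) l (p :: l) = diffs p l := by
  induction l generalizing p with
  | nil => rfl
  | cons x t ih => simp [diffs, ih]

lemma diffs_append (p : G) (l₁ l₂ : List G) :
    diffs p (l₁ ++ l₂) = diffs p l₁ ++ diffs (l₁.getLastD p) l₂ := by
  induction l₁ generalizing p with
  | nil => rfl
  | cons x t ih => simp only [List.cons_append, diffs, ih, List.getLastD_cons]

lemma diffs_map_add (p s : G) (l : List G) :
    diffs p (l.map (· + s)) = diffs (p - s) l := by
  induction l generalizing p with
  | nil => rfl
  | cons x t ih => simp [diffs, ih, sub_sub_eq_add_sub]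

end Diffs

section Moulds

variable {K : Type*} [Field K]

lemma addFirst_zero (l : List K) : addFirst 0 l = l := by
  cases l <;> simp [addFirst]

lemma addFirst_addFirst (s t : K) (l : List K) :
    addFirst s (addFirst t l) = addFirst (t + s) l := by
  cases l <;> simp [addFirst, add_assoc]

lemma diffs_eq_addFirst (p : K) (l : List K) : diffs p l = addFirst (-p) (diffs 0 l) := by
  cases l <;> simp [diffs, addFirst, sub_eq_add_neg]

lemma addLast_concat (s : K) (l : List K) (x : K) : addLast s (l ++ [x]) = l ++ [x + s] := by
  induction l with
  | nil => rfl
  | cons y t ih => cases t <;> simp_all [addLast]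

lemma swapUargs_eq_diffs (l : List K) : swapUargs l = diffs 0 l.reverse :=
  zipWith_sub_cons_eq_diffs _ _

lemma swapUargs_map_add (s : K) (l : List K) :
    swapUargs (l.map (· + s)) = addFirst s (swapUargs l) := by
  rw [swapUargs_eq_diffs, swapUargs_eq_diffs, ← List.map_reverse, diffs_map_add, zero_sub,
    diffs_eq_addFirst, neg_neg]

lemma swapUargs_append (l₁ l₂ : List K) :
    swapUargs (l₁ ++ l₂) = swapUargs l₂ ++ addFirst (-l₂.headD 0) (swapUargs l₁) := by
  rw [swapUargs_eq_diffs, swapUargs_eq_diffs, swapUargs_eq_diffs, List.reverse_append,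
    diffs_append, ← diffs_eq_addFirst]
  cases l₂ <;> simp

lemma length_swapVargs (l : List K) : (swapVargs l).length = l.length := by
  simp [swapVargs]

lemma swapVargs_eq_nil_iff {l : List K} : swapVargs l = [] ↔ l = [] := by
  rw [← List.length_eq_zero_iff, length_swapVargs, List.length_eq_zero_iff]

lemma swapVargs_append (l₁ l₂ : List K) :
    swapVargs (l₁ ++ l₂) = (swapVargs l₂).map (· + l₁.sum) ++ swapVargs l₁ := by
  simp only [swapVargs, List.length_append, add_comm l₁.length, List.range_add, List.map_append,
    List.map_map]
  congr 1
  · refine List.map_congr_left fun i hi => ?_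
    rw [List.mem_range] at hi
    rw [Function.comp_apply, show l₂.length + l₁.length - i = l₁.length + (l₂.length - i) by omega,
      List.take_append, List.take_of_length_le (by omega), List.sum_append, add_comm]
    simp
  · refine List.map_congr_left fun i _ => ?_
    simp [List.take_append, Nat.add_sub_add_left]

lemma swapVargs_singleton (x : K) : swapVargs [x] = [x] := by
  simp [swapVargs]

lemma headD_swapVargs (l : List K) : (swapVargs l).headD 0 = l.sum := by
  cases l with
  | nil => rfl
  | cons x t => simp [swapVargs, List.range_succ_eq_map]

lemma swapUargs_swapVargs (l : List K) : swapUargs (swapVargs l) = l := by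
  induction l with
  | nil => rfl
  | cons x t ih =>
    rw [← List.singleton_append, swapVargs_append, swapUargs_append, swapVargs_singleton,
      swapUargs_map_add, ih, addFirst_addFirst]
    simp [addFirst_zero, swapUargs]

def swapSplit (t : List K × List K × List K) : List K × List K × List K :=
  ((swapVargs t.2.2).map (· + (t.2.1.sum + t.1.sum)), (swapVargs t.2.1).map (· + t.1.sum),
    swapVargs t.1)

lemma split3At_swapVargs_append (a b c : List K) :
    split3At (swapVargs (a ++ b ++ c)) (c.length, b.length) = swapSplit (a, b, c) := by
  have h := split3At_append ((swapVargs c).map (· + (b.sum + a.sum)))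
    ((swapVargs b).map (· + a.sum)) (swapVargs a)
  simp only [List.length_map, length_swapVargs] at h
  rw [List.append_assoc, swapVargs_append, swapVargs_append, List.map_append, List.map_map]
  simpa only [swapSplit, Function.comp_def, add_assoc] using h

lemma sum_splits3_swapVargs {M : Type*} [AddCommMonoid M] (w : List K)
    (f : List K × List K × List K → M) :
    ((splits3 (swapVargs w)).map f).sum = ∑ p ∈ triangle w.length, f (swapSplit (split3At w p)) := by
  rw [sum_splits3_s11, length_swapVargs, ← sum_triangle_reflect]
  refine Finset.sum_congr rfl fun p hp => ?_
  rcases h : split3At w p with ⟨a, b, c⟩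
  obtain ⟨rfl, ha, hb⟩ := eq_append_of_split3At_eq hp h
  rw [← split3At_swapVargs_append]
  congr 3
  · simp only [List.length_append, ← ha, ← hb]
    omega
  · exact hb.symm

lemma getLast?_swapVargs_cons (y : K) (c : List K) : (swapVargs (y :: c)).getLast? = some y := by
  rw [← List.singleton_append, swapVargs_append, swapVargs_singleton, List.getLast?_concat]

lemma pushM_of_ne_nil (B : List K → K) {w : List K} (hw : w ≠ []) :
    pushM B w = B (-w.sum :: w.dropLast) := by
  cases w
  · contradiction
  · rfl

def amitUTerm (B A : List K → K) (t : List K × List K × List K) : K :=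
  A (t.1 ++ addFirst t.2.1.sum t.2.2) * B t.2.1

def anitUTerm (B A : List K → K) (t : List K × List K × List K) : K :=
  A (addLast t.2.1.sum t.1 ++ t.2.2) * B t.2.1

def amitVTerm (B A : List K → K) (t : List K × List K × List K) : K :=
  A (t.1 ++ t.2.2) * B (t.2.1.map (· - t.2.2.headD 0))

def anitVTerm (B A : List K → K) (t : List K × List K × List K) : K :=
  A (t.1 ++ t.2.2) * B (t.2.1.map (· - t.1.getLastD 0))

lemma amitU_eq_sum (B A : List K → K) (w : List K) :
    amitU B A w = ((splits3 w).map fun t =>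
      if t.2.1 = [] ∨ t.2.2 = [] then 0 else amitUTerm B A t).sum := by
  unfold amitU
  congr 1
  refine List.map_congr_left ?_
  rintro ⟨a, _ | ⟨x, b⟩, _ | ⟨y, c⟩⟩ - <;> simp [amitUTerm]

lemma anitU_eq_sum (B A : List K → K) (w : List K) :
    anitU B A w = ((splits3 w).map fun t =>
      if t.1 = [] ∨ t.2.1 = [] then 0 else anitUTerm B A t).sum := by
  unfold anitU
  congr 1
  refine List.map_congr_left ?_
  rintro ⟨_ | ⟨x, a⟩, _ | ⟨y, b⟩, c⟩ - <;> simp [anitUTerm]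

lemma amitV_eq_sum (B A : List K → K) (w : List K) :
    amitV B A w = ((splits3 w).map fun t =>
      if t.2.1 = [] ∨ t.2.2 = [] then 0 else amitVTerm B A t).sum := by
  unfold amitV
  congr 1
  refine List.map_congr_left ?_
  rintro ⟨a, _ | ⟨x, b⟩, _ | ⟨y, c⟩⟩ - <;> simp [amitVTerm]

lemma anitV_eq_sum (B A : List K → K) (w : List K) :
    anitV B A w = ((splits3 w).map fun t =>
      if t.1 = [] ∨ t.2.1 = [] then 0 else anitVTerm B A t).sum := by
  unfold anitV
  congr 1
  refine List.map_congr_left ?_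
  rintro ⟨_ | ⟨x, a⟩, _ | ⟨y, b⟩, c⟩ - <;> simp [anitVTerm]

lemma amitVTerm_swapSplit (A B : List K → K) (a b c : List K) :
    amitVTerm (swapUV B) (swapUV A) (swapSplit (a, b, c)) = amitUTerm B A (a, b, c) := by
  simp only [amitVTerm, amitUTerm, swapSplit, swapUV, headD_swapVargs, List.map_map,
    swapUargs_append, swapUargs_map_add, swapUargs_swapVargs, addFirst_addFirst,
    Function.comp_def, add_sub_cancel_right, add_neg_cancel_right, List.map_id']

lemma anitVTerm_swapSplit (A B : List K → K) (a b c : List K) (x y : K) :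
    anitVTerm (swapUV B) (swapUV A) (swapSplit (a, x :: b, y :: c))
      = anitUTerm (pushM B) A (a ++ [x], b ++ [y], c) := by
  simp only [anitVTerm, anitUTerm, swapSplit, swapUV, headD_swapVargs, List.map_map,
    swapUargs_append, swapUargs_map_add, swapUargs_swapVargs, addFirst_addFirst, addLast_concat,
    Function.comp_def, List.getLastD_eq_getLast?, List.getLast?_map, getLast?_swapVargs_cons,
    Option.map_some, Option.getD_some, add_sub_assoc, add_neg_cancel_right,
    pushM_of_ne_nil B (List.concat_ne_nil y b), List.dropLast_concat]
  simp only [addFirst, List.sum_cons, List.sum_append, List.sum_nil, add_zero, List.cons_append,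
    List.nil_append, List.append_assoc]
  rw [show y + (x + b.sum) = x + (b.sum + y) by ring,
    show x + (a.sum - (y + (x + b.sum + a.sum))) = -(b.sum + y) by ring]

lemma amitU_eq_sum_triangle (A B : List K → K) (w : List K) :
    amitU B A w = ∑ p ∈ triangle w.length,
      if 0 < p.2 ∧ p.1 + p.2 < w.length then amitUTerm B A (split3At w p) else 0 := by
  rw [amitU_eq_sum, sum_splits3_s11]
  refine Finset.sum_congr rfl fun p hp => ?_
  rcases h : split3At w p with ⟨a, b, c⟩
  obtain ⟨-, hb, hc⟩ := split3At_eq_nil_iff hp h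
  rw [mem_triangle] at hp
  simp only [hb, hc]
  split_ifs <;> first | rfl | omega

lemma anitU_eq_sum_triangle (A B : List K → K) (w : List K) :
    anitU B A w = ∑ p ∈ triangle w.length,
      if 0 < p.1 ∧ 0 < p.2 then anitUTerm B A (split3At w p) else 0 := by
  rw [anitU_eq_sum, sum_splits3_s11]
  refine Finset.sum_congr rfl fun p hp => ?_
  rcases h : split3At w p with ⟨a, b, c⟩
  obtain ⟨ha, hb, -⟩ := split3At_eq_nil_iff hp h
  simp only [ha, hb]
  split_ifs <;> first | rfl | omega

lemma mu_eq_sum_range (A B : List K → K) (w : List K) :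
    mu A B w = ∑ i ∈ Finset.range (w.length + 1), amitUTerm B A (split3At w (i, w.length - i)) := by
  refine Finset.sum_congr rfl fun i hi => ?_
  rw [Finset.mem_range] at hi
  have hc : (w.drop i).drop (w.length - i) = [] := List.drop_eq_nil_of_le (by simp)
  have hb : (w.drop i).take (w.length - i) = w.drop i := List.take_of_length_le (by simp)
  simp only [amitUTerm, split3At, hc, hb, addFirst, List.append_nil]

lemma swapVU_amitV_swapUV (A B : List K → K) (w : List K) :
    swapVU (amitV (swapUV B) (swapUV A)) w = ∑ p ∈ triangle w.length,
      if 0 < p.1 ∧ 0 < p.2 then amitUTerm B A (split3At w p) else 0 := by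
  rw [swapVU, amitV_eq_sum, sum_splits3_swapVargs]
  refine Finset.sum_congr rfl fun p hp => ?_
  rcases h : split3At w p with ⟨a, b, c⟩
  obtain ⟨ha, hb, -⟩ := split3At_eq_nil_iff hp h
  rw [amitVTerm_swapSplit]
  simp only [swapSplit, List.map_eq_nil_iff, swapVargs_eq_nil_iff, ha, hb]
  split_ifs <;> first | rfl | omega

lemma swapVU_mu_swapUV (A B : List K → K) (w : List K) :
    swapVU (mu (swapUV A) (swapUV B)) w
      = ∑ j ∈ Finset.range (w.length + 1), amitUTerm B A (split3At w (0, j)) := by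
  rw [swapVU, mu, length_swapVargs, ← Finset.sum_range_reflect]
  refine Finset.sum_congr rfl fun j hj => ?_
  rw [Finset.mem_range] at hj
  obtain ⟨a, b, rfl, rfl⟩ : ∃ a b, w = a ++ b ∧ a.length = j :=
    ⟨w.take j, w.drop j, (List.take_append_drop j w).symm, List.length_take_of_le (by omega)⟩
  have hb : ((swapVargs b).map (· + a.sum)).length = (a ++ b).length + 1 - 1 - a.length := by
    simp [length_swapVargs]
  rw [swapVargs_append, List.take_left' hb, List.drop_left' hb]
  simp [swapUV, swapUargs_map_add, swapUargs_swapVargs, amitUTerm, split3At]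

lemma swapVU_anitV_swapUV_eq_sum (A B : List K → K) (w : List K) :
    swapVU (anitV (swapUV B) (swapUV A)) w = ∑ p ∈ triangle w.length,
      if 0 < p.2 ∧ p.1 + p.2 < w.length
      then anitVTerm (swapUV B) (swapUV A) (swapSplit (split3At w p)) else 0 := by
  rw [swapVU, anitV_eq_sum, sum_splits3_swapVargs]
  refine Finset.sum_congr rfl fun p hp => ?_
  rcases h : split3At w p with ⟨a, b, c⟩
  obtain ⟨-, hb, hc⟩ := split3At_eq_nil_iff hp h
  rw [mem_triangle] at hp
  simp only [swapSplit, List.map_eq_nil_iff, swapVargs_eq_nil_iff, hb, hc]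
  split_ifs <;> first | rfl | omega

lemma swapVU_anitV_swapUV (A B : List K → K) (w : List K) :
    swapVU (anitV (swapUV B) (swapUV A)) w = anitU (pushM B) A w := by
  rw [swapVU_anitV_swapUV_eq_sum, anitU_eq_sum_triangle]
  refine sum_triangle_shift fun i j hj hij => ?_
  obtain ⟨a, x, b, y, c, h, h'⟩ := exists_split3At_cons hj hij
  rw [h, h', anitVTerm_swapSplit]

lemma swapVU_amitV_add_mu (A B : List K → K) (w : List K) :
    swapVU (amitV (swapUV B) (swapUV A)) w + swapVU (mu (swapUV A) (swapUV B)) w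
      = amitU B A w + mu A B w := by
  rw [swapVU_amitV_swapUV, swapVU_mu_swapUV, amitU_eq_sum_triangle, mu_eq_sum_range]
  exact sum_triangle_add_sum_range (fun p => amitUTerm B A (split3At w p))
    (by simp [amitUTerm, split3At, addFirst_zero])

-- The right-hand side is `axit(B, -push B)·A - axit(A, -push A)·B + lu(A, B)`.
theorem swapVU_ariV_swapUV (A B : List K → K) :
    swapVU (ariV (swapUV A) (swapUV B)) = fun w =>
      (amitU B A w - anitU (pushM B) A w) - (amitU A B w - anitU (pushM A) B w) + lu A B w := by
  funext w
  have hAB := swapVU_amitV_add_mu A B w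
  have hBA := swapVU_amitV_add_mu B A w
  rw [← swapVU_anitV_swapUV, ← swapVU_anitV_swapUV]
  simp only [swapVU, ariV, aritV, lu] at *
  linear_combination hAB - hBA

end Moulds

theorem swap_ari_swap_of_push_invariant_general (A B : List K → K)
    (hA : pushM A = A) (hB : pushM B = B) :
    swapVU (ariV (swapUV A) (swapUV B)) = ariU A B := by
  rw [swapVU_ariV_swapUV, hA, hB]
  funext w
  simp only [ariU, aritU]
  ring

/-- for push-invariant moulds `A, B` in ARI,
`swap(ari(swap A, swap B)) = ari(A,B)`. -/
theorem swap_ari_swap_of_push_invariant (A B : List K → K)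
    (hA0 : A [] = 0) (hB0 : B [] = 0)
    (hA : pushM A = A) (hB : pushM B = B) :
    swapVU (ariV (swapUV A) (swapUV B)) = ariU A B :=
  swap_ari_swap_of_push_invariant_general A B hA hB
end
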